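/- For every oriented tree T of positive height at most 3, there exists a dual D_T of T whose number of vertices is at most linear in the number of vertices of T; specifically if T has height 1 its dual is TT_1, if height 2 its dual is TT_2, and if height 3 its core is Q_{n+1} for some odd n ≥ 3 and its dual is AC_n. -/

import Mathlib

/-!
Heights 1 and 2: a path of the tree from a vertex of level `0` to one of level `h` contains a
directed path of length `h`, so the levels make `T` homomorphically equivalent to the directed
path on `h + 1` vertices, whose dual is `TT h` (label each vertex by the length of the longest
directed walk ending there).

Height 3: between its last visit to level `0` and its first visit to level `3`, such a path
reads `0, 1, 2, 1, 2, …, 1, 2, 3`, a copy of some `Q (m + 1)`. For the least odd `n` with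
`Q (n + 1) → T`, labelling every vertex by the length of the shortest initial segment of `Q`
ending at it gives `T → Q (n + 1)`. Finally `AC n` is a dual of `Q (n + 1)`: a walk in `AC n`
following the pattern of `Q` advances by at most one vertex per arc and cannot close up in
`n` arcs, and if `Q (n + 1) ↛ G` the same shortest-segment labelling maps `G` to `AC n`.
-/

/-- A homomorphism of digraphs (binary relations) is an arc-preserving vertex map. -/
def Hom {α : Type*} {β : Type*} (A : α → α → Prop) (B : β → β → Prop) (f : α → β) : Prop :=
  ∀ u v, A u v → B (f u) (f v)

/-- `A` admits a homomorphism to `B`. -/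
def HomTo {α : Type*} {β : Type*} (A : α → α → Prop) (B : β → β → Prop) : Prop :=
  ∃ f : α → β, Hom A B f

/-- Homomorphic equivalence of digraphs. -/
def HomEquiv {α : Type*} {β : Type*} (A : α → α → Prop) (B : β → β → Prop) : Prop :=
  HomTo A B ∧ HomTo B A

/-- An oriented graph: no symmetric arcs (in particular, no loops). -/
def IsOriented {α : Type*} (G : α → α → Prop) : Prop := ∀ u v, G u v → ¬ G v u

/-- A digraph is (weakly) connected: any two vertices are joined by a semi-walk. -/
def Conn {α : Type*} (G : α → α → Prop) : Prop :=
  ∀ u v : α, Relation.ReflTransGen (fun a b => G a b ∨ G b a) u v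

/-- Direction of the `i`-th arc (between `q i` and `q (i+1)`) of the oriented path `Q n`:
the first two arcs are forward, the middle section `(q 1, …, q (n-2))` alternates
(so its arcs `1 ≤ i ≤ n-3` are forward iff `i` is odd), and the last two arcs agree
in direction. -/
def QForward (n i : ℕ) : Prop :=
  i = 0 ∨ i = 1 ∨ (i + 3 ≤ n ∧ Odd i) ∨ (i = n - 2 ∧ Even n)

/-- The oriented path `Q n` on vertex set `Fin n`. -/
def QArc (n : ℕ) (u v : Fin n) : Prop :=
  ((v : ℕ) = (u : ℕ) + 1 ∧ QForward n (u : ℕ)) ∨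
  ((u : ℕ) = (v : ℕ) + 1 ∧ ¬ QForward n (v : ℕ))

/-- The oriented cycle `AC n` on vertex set `Fin n`, obtained by identifying the endpoints
of the alternating path on `n+1` vertices beginning with a forward arc: the arc between
`a i` and `a ((i+1) % n)` is forward iff `i` is even. -/
def ACArc (n : ℕ) (u v : Fin n) : Prop :=
  ((v : ℕ) = ((u : ℕ) + 1) % n ∧ Even (u : ℕ)) ∨
  ((u : ℕ) = ((v : ℕ) + 1) % n ∧ ¬ Even (v : ℕ))

/-- The directed path on `k` vertices. -/
def DiPath (k : ℕ) (u v : Fin k) : Prop := (v : ℕ) = (u : ℕ) + 1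

/-- The transitive tournament on `k` vertices. -/
def TT (k : ℕ) (u v : Fin k) : Prop := u < v

/-- `(A, B)` is a duality pair: for every digraph `G`, `A → G` iff `G ↛ B`. -/
def DualityPair {α : Type*} {β : Type*} (A : α → α → Prop) (B : β → β → Prop) : Prop :=
  ∀ (W : Type) (G : W → W → Prop), HomTo A G ↔ ¬ HomTo G B

/-- `o` is an orientation of the undirected graph `G`: every arc of `o` lies on an edge
of `G`, and every edge of `G` gets exactly one of the two directions. -/
def IsOrientationOf {V : Type*} (o : V → V → Prop) (G : SimpleGraph V) : Prop :=
  (∀ u v, o u v → G.Adj u v) ∧ ∀ u v, G.Adj u v → Xor' (o u v) (o v u)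

/-- The undirected cycle on `k` vertices. -/
def UCycle (k : ℕ) : SimpleGraph (Fin k) :=
  SimpleGraph.fromRel (fun u v => (v : ℕ) = ((u : ℕ) + 1) % k)

open SimpleGraph

section Homomorphisms

variable {α β γ : Type*} {A : α → α → Prop} {B : β → β → Prop} {C : γ → γ → Prop}

theorem HomTo.trans (hAB : HomTo A B) (hBC : HomTo B C) : HomTo A C := by
  obtain ⟨f, hf⟩ := hAB
  obtain ⟨g, hg⟩ := hBC
  exact ⟨g ∘ f, fun u v h => hg _ _ (hf u v h)⟩

theorem HomEquiv.dualityPair (hAB : HomEquiv A B) (hB : DualityPair B C) : DualityPair A C :=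
  fun W G => ⟨fun h => (hB W G).1 (hAB.2.trans h), fun h => hAB.1.trans ((hB W G).2 h)⟩

end Homomorphisms

def PathArc (P : ℕ → Prop) (n : ℕ) (u v : Fin n) : Prop :=
  ((v : ℕ) = (u : ℕ) + 1 ∧ P u) ∨ ((u : ℕ) = (v : ℕ) + 1 ∧ ¬ P v)

theorem qArc_eq_pathArc (n : ℕ) : QArc n = PathArc (QForward n) n := rfl

theorem diPath_eq_pathArc (n : ℕ) : DiPath n = PathArc (fun _ => True) n := by
  funext u v
  simp [DiPath, PathArc]

theorem pathArc_congr {P P' : ℕ → Prop} {m : ℕ} (h : ∀ k < m, P k ↔ P' k) :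
    PathArc P (m + 1) = PathArc P' (m + 1) := by
  funext u v
  have hu := u.isLt
  have hv := v.isLt
  unfold PathArc
  apply propext
  constructor
  · rintro (⟨huv, hP⟩ | ⟨huv, hP⟩)
    · exact Or.inl ⟨huv, (h _ (by omega)).1 hP⟩
    · exact Or.inr ⟨huv, fun hP' => hP ((h _ (by omega)).2 hP')⟩
  · rintro (⟨huv, hP⟩ | ⟨huv, hP⟩)
    · exact Or.inl ⟨huv, (h _ (by omega)).2 hP⟩
    · exact Or.inr ⟨huv, fun hP' => hP ((h _ (by omega)).1 hP')⟩

section Walks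

variable {W : Type*} (G : W → W → Prop) (P : ℕ → Prop)

/-- `x` is the image of the last vertex under some homomorphism `PathArc P (i + 1) → G`. -/
def WalkEnd : ℕ → W → Prop
  | 0, _ => True
  | i + 1, x => ∃ y, WalkEnd i y ∧ ((P i ∧ G y x) ∨ (¬ P i ∧ G x y))

variable {G P}

theorem walkEnd_congr {P' : ℕ → Prop} {i : ℕ} (h : ∀ j < i, P j ↔ P' j) {x : W} :
    WalkEnd G P i x ↔ WalkEnd G P' i x := by
  induction i generalizing x with
  | zero => exact Iff.rfl
  | succ i ih =>
    have hi := h i (by omega)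
    simp only [WalkEnd, ih fun j hj => h j (by omega), hi]

theorem WalkEnd.exists_walk {i : ℕ} {x : W} (hx : WalkEnd G P i x) :
    ∃ w : ℕ → W, w i = x ∧
      ∀ j < i, (P j ∧ G (w j) (w (j + 1))) ∨ (¬ P j ∧ G (w (j + 1)) (w j)) := by
  induction i generalizing x with
  | zero => exact ⟨fun _ => x, rfl, by omega⟩
  | succ i ih =>
    obtain ⟨y, hy, hstep⟩ := hx
    obtain ⟨w, hwi, hw⟩ := ih hy
    refine ⟨fun t => if t ≤ i then w t else x, by simp, fun j hj => ?_⟩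
    rcases Nat.lt_or_ge j i with hji | hji
    · simpa [hji.le, Nat.succ_le_of_lt hji] using hw j hji
    · obtain rfl : j = i := by omega
      simpa [hwi] using hstep

theorem homTo_pathArc_iff {m : ℕ} : HomTo (PathArc P (m + 1)) G ↔ ∃ x, WalkEnd G P m x := by
  constructor
  · rintro ⟨f, hf⟩
    have key : ∀ i (hi : i ≤ m), WalkEnd G P i (f ⟨i, by omega⟩) := by
      intro i
      induction i with
      | zero => exact fun _ => trivial
      | succ i ih =>
        intro hi
        refine ⟨_, ih (by omega), ?_⟩
        by_cases hP : P i
        · exact Or.inl ⟨hP, hf _ _ (Or.inl ⟨rfl, hP⟩)⟩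
        · exact Or.inr ⟨hP, hf _ _ (Or.inr ⟨rfl, hP⟩)⟩
    exact ⟨_, key m le_rfl⟩
  · rintro ⟨x, hx⟩
    obtain ⟨w, -, hw⟩ := hx.exists_walk
    refine ⟨fun u => w u, ?_⟩
    rintro u v (⟨huv, hP⟩ | ⟨huv, hP⟩)
    · have := hw u (by omega)
      simp only [huv]
      tauto
    · have := hw v (by omega)
      simp only [huv]
      tauto

end Walks

theorem dualityPair_diPath_TT (k : ℕ) : DualityPair (DiPath (k + 1)) (TT k) := by
  intro W G
  constructor
  · rintro hP ⟨g, hg⟩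
    obtain ⟨f, hf⟩ := hP.trans ⟨g, hg⟩
    have hmono : StrictMono f :=
      Fin.strictMono_iff_lt_succ.2 fun i => hf _ _ (by simp [DiPath])
    simpa using Fintype.card_le_of_injective f hmono.injective
  · intro hG
    by_contra hP
    apply hG
    classical
    have hlong : ∀ x, ¬ WalkEnd G (fun _ => True) k x := fun x hx =>
      hP ((diPath_eq_pathArc _ ▸ homTo_pathArc_iff).2 ⟨x, hx⟩)
    let depth x := Nat.findGreatest (fun i => WalkEnd G (fun _ => True) i x) k
    have hdepth : ∀ x, WalkEnd G (fun _ => True) (depth x) x := fun x =>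
      Nat.findGreatest_spec (P := fun i => WalkEnd G (fun _ => True) i x) (Nat.zero_le k) trivial
    have hlt : ∀ x, depth x < k := fun x =>
      lt_of_le_of_ne (Nat.findGreatest_le k) fun h => hlong x (h ▸ hdepth x)
    refine ⟨fun x => ⟨depth x, hlt x⟩, fun x y hxy => ?_⟩
    show depth x < depth y
    exact Nat.le_findGreatest (hlt x) ⟨x, hdepth x, Or.inl ⟨trivial, hxy⟩⟩

/-- The directions of all arcs of `QArc (m + 1)` but the last one; they do not depend on `m`. -/
def QPattern (i : ℕ) : Prop := i ≤ 1 ∨ i % 2 = 1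

theorem qForward_iff {n i : ℕ} :
    QForward n i ↔ i ≤ 1 ∨ (i + 3 ≤ n ∧ i % 2 = 1) ∨ (i = n - 2 ∧ n % 2 = 0) := by
  simp only [QForward, Nat.odd_iff, Nat.even_iff]
  omega

theorem qForward_iff_qPattern {n i : ℕ} (h : i + 3 ≤ n) : QForward n i ↔ QPattern i := by
  rw [qForward_iff]
  unfold QPattern
  omega

section QPatternWalks

variable {W : Type*} {G : W → W → Prop}

theorem WalkEnd.qPattern_add_two {i : ℕ} {x : W} (hi : 2 ≤ i) (hx : WalkEnd G QPattern i x) :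
    WalkEnd G QPattern (i + 2) x := by
  obtain ⟨j, rfl⟩ : ∃ j, i = j + 1 := ⟨i - 1, by omega⟩
  obtain ⟨y, hy, hyx⟩ := hx
  have h1 : QPattern (j + 1) ↔ ¬ QPattern j := by unfold QPattern; omega
  have h2 : QPattern (j + 2) ↔ QPattern j := by unfold QPattern; omega
  -- go back and forth along the last arc
  exact ⟨y, ⟨x, ⟨y, hy, hyx⟩, by rw [h1]; tauto⟩, by rw [h2]; tauto⟩

theorem WalkEnd.qPattern_of_le {i j : ℕ} {x : W} (hi : 2 ≤ i) (hij : i ≤ j)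
    (hpar : i % 2 = j % 2) (hx : WalkEnd G QPattern i x) : WalkEnd G QPattern j x := by
  obtain ⟨k, rfl⟩ : ∃ k, j = i + 2 * k := ⟨(j - i) / 2, by omega⟩
  induction k with
  | zero => exact hx
  | succ k ih =>
    rw [show i + 2 * (k + 1) = i + 2 * k + 2 by ring]
    exact (ih (by omega) (by omega)).qPattern_add_two (by omega)

theorem WalkEnd.qPattern_exists_in {i : ℕ} {x : W} (hi : 2 ≤ i) (he : i % 2 = 0)
    (hx : WalkEnd G QPattern i x) : ∃ y, G y x := by
  obtain ⟨j, rfl⟩ : ∃ j, i = j + 1 := ⟨i - 1, by omega⟩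
  obtain ⟨y, -, ⟨-, h⟩ | ⟨hP, -⟩⟩ := hx
  · exact ⟨y, h⟩
  · exact absurd (Or.inr (by omega)) hP

theorem WalkEnd.qPattern_exists_out {i : ℕ} {x : W} (hi : 3 ≤ i) (ho : i % 2 = 1)
    (hx : WalkEnd G QPattern i x) : ∃ y, G x y := by
  obtain ⟨j, rfl⟩ : ∃ j, i = j + 1 := ⟨i - 1, by omega⟩
  obtain ⟨y, -, ⟨hP, -⟩ | ⟨-, h⟩⟩ := hx
  · exact absurd hP (by unfold QPattern; omega)
  · exact ⟨y, h⟩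

theorem homTo_QArc_iff {m : ℕ} (hm : Odd m) (h3 : 3 ≤ m) :
    HomTo (QArc (m + 1)) G ↔ ∃ y x, WalkEnd G QPattern (m - 1) y ∧ G y x := by
  have hm2 := Nat.odd_iff.1 hm
  obtain ⟨k, rfl⟩ : ∃ k, m = k + 1 := ⟨m - 1, by omega⟩
  have hlast : QForward (k + 1 + 1) k := qForward_iff.2 (by omega)
  have hcongr : ∀ {y}, WalkEnd G (QForward (k + 1 + 1)) k y ↔ WalkEnd G QPattern k y :=
    walkEnd_congr fun j hj => qForward_iff_qPattern (by omega)
  rw [qArc_eq_pathArc, homTo_pathArc_iff, Nat.add_sub_cancel]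
  constructor
  · rintro ⟨x, y, hy, ⟨-, hyx⟩ | ⟨hnot, -⟩⟩
    · exact ⟨y, x, hcongr.1 hy, hyx⟩
    · exact absurd hlast hnot
  · rintro ⟨y, x, hy, hyx⟩
    exact ⟨x, y, hcongr.2 hy, Or.inl ⟨hlast, hyx⟩⟩

end QPatternWalks

section AlternatingCycle

variable {n : ℕ}

theorem acArc_iff (hn : Odd n) {u v : Fin n} :
    ACArc n u v ↔ ((v : ℕ) = u + 1 ∧ (u : ℕ) % 2 = 0) ∨ ((u : ℕ) = n - 1 ∧ (v : ℕ) = 0) ∨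
      ((u : ℕ) = v + 1 ∧ (v : ℕ) % 2 = 1) := by
  have hn2 := Nat.odd_iff.1 hn
  have hmod : ∀ a : Fin n, ((a : ℕ) + 1) % n = if (a : ℕ) + 1 < n then (a : ℕ) + 1 else 0 := by
    intro a
    split_ifs with h
    · exact Nat.mod_eq_of_lt h
    · rw [show (a : ℕ) + 1 = n by omega, Nat.mod_self]
  unfold ACArc
  rw [hmod u, hmod v]
  simp only [Nat.even_iff]
  split_ifs <;> omega

theorem walkEnd_ACArc_lt (hn : Odd n) {i : ℕ} (hi : 2 ≤ i) (hin : i ≤ n - 1) {v : Fin n}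
    (hv : WalkEnd (ACArc n) QPattern i v) : (v : ℕ) < i ∧ ((v : ℕ) + i) % 2 = 1 := by
  have hn2 := Nat.odd_iff.1 hn
  induction i, hi using Nat.le_induction generalizing v with
  | base =>
    obtain ⟨u, ⟨w, -, hwu⟩, huv⟩ := hv
    simp only [QPattern, acArc_iff hn] at hwu huv
    omega
  | succ i hi ih =>
    obtain ⟨z, hz, hstep⟩ := hv
    have := ih (by omega) hz
    simp only [QPattern, acArc_iff hn] at hstep
    omega

theorem not_homTo_QArc_ACArc (hn : Odd n) (h3 : 3 ≤ n) : ¬ HomTo (QArc (n + 1)) (ACArc n) := by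
  rw [homTo_QArc_iff hn h3]
  rintro ⟨y, x, hy, hyx⟩
  have := walkEnd_ACArc_lt hn (by omega) le_rfl hy
  have := Nat.odd_iff.1 hn
  rw [acArc_iff hn] at hyx
  omega

end AlternatingCycle

section ACLabel

variable {W : Type*} {G : W → W → Prop} {n : ℕ} {x : W}

variable (G n) in
def acIndexSet (x : W) : Set ℕ :=
  {i | (2 ≤ i ∧ WalkEnd G QPattern i x) ∨ i = n ∨ (i = n - 1 ∧ ∀ y, ¬ G x y)}

variable (G n) in
/-- The vertex `0` is the only vertex of `AC n` with both in- and out-arcs; any other vertex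
goes to one less than the least length `≥ 2` of an initial segment of `QArc` ending at it,
capped at `n` for sources and at `n - 1` for sinks. -/
noncomputable def acLabel (x : W) : ℕ :=
  open Classical in
  if (∃ y, G y x) ∧ (∃ y, G x y) then 0 else sInf (acIndexSet G n x) - 1

theorem sInf_acIndexSet_mem : sInf (acIndexSet G n x) ∈ acIndexSet G n x :=
  Nat.sInf_mem ⟨n, Or.inr (Or.inl rfl)⟩

theorem sInf_acIndexSet_of_source (hn : Odd n) (h3 : 3 ≤ n) (hin : ∀ w, ¬ G w x) {y : W}
    (hxy : G x y) :
    sInf (acIndexSet G n x) % 2 = 1 ∧ 3 ≤ sInf (acIndexSet G n x) ∧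
      sInf (acIndexSet G n x) ≤ n := by
  have hn2 := Nat.odd_iff.1 hn
  have hle : sInf (acIndexSet G n x) ≤ n := Nat.sInf_le (Or.inr (Or.inl rfl))
  rcases sInf_acIndexSet_mem (G := G) (n := n) (x := x) with ⟨h2, hw⟩ | h | ⟨-, hout⟩
  · have hodd : sInf (acIndexSet G n x) % 2 = 1 := by
      by_contra he
      obtain ⟨w, hwx⟩ := hw.qPattern_exists_in h2 (by omega)
      exact hin w hwx
    exact ⟨hodd, by omega, hle⟩
  · omega
  · exact absurd hxy (hout y)

theorem sInf_acIndexSet_of_sink (hn : Odd n) (h3 : 3 ≤ n) (hout : ∀ y, ¬ G x y) :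
    sInf (acIndexSet G n x) % 2 = 0 ∧ 2 ≤ sInf (acIndexSet G n x) ∧
      sInf (acIndexSet G n x) ≤ n - 1 := by
  have hn2 := Nat.odd_iff.1 hn
  have hle : sInf (acIndexSet G n x) ≤ n - 1 := Nat.sInf_le (Or.inr (Or.inr ⟨rfl, hout⟩))
  rcases sInf_acIndexSet_mem (G := G) (n := n) (x := x) with ⟨h2, hw⟩ | h | ⟨h, -⟩
  · have heven : sInf (acIndexSet G n x) % 2 = 0 := by
      by_contra ho
      obtain ⟨y, hxy⟩ := hw.qPattern_exists_out (by omega) (by omega)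
      exact hout y hxy
    exact ⟨heven, h2, hle⟩
  · omega
  · omega

theorem acLabel_of_in_out (hin : ∃ w, G w x) (hout : ∃ y, G x y) : acLabel G n x = 0 :=
  if_pos ⟨hin, hout⟩

theorem acLabel_of_not_in_out (h : ¬ ((∃ w, G w x) ∧ ∃ y, G x y)) :
    acLabel G n x = sInf (acIndexSet G n x) - 1 :=
  if_neg h

theorem acLabel_lt (h1 : 1 ≤ n) (x : W) : acLabel G n x < n := by
  have : sInf (acIndexSet G n x) ≤ n := Nat.sInf_le (Or.inr (Or.inl rfl))
  unfold acLabel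
  split_ifs <;> omega

variable (hn : Odd n) (h3 : 3 ≤ n) (hQ : ¬ HomTo (QArc (n + 1)) G)
include hn h3 hQ

theorem not_adj_of_walkEnd_of_not_homTo_QArc {i : ℕ} {y z : W} (hi : 2 ≤ i) (hin : i ≤ n - 1)
    (he : i % 2 = 0) (hy : WalkEnd G QPattern i y) : ¬ G y z := fun hyz =>
  have := Nat.odd_iff.1 hn
  hQ ((homTo_QArc_iff hn h3).2 ⟨y, z, hy.qPattern_of_le hi hin (by omega), hyz⟩)

theorem acLabel_of_in_arc {w y : W} (hwx : G w x) (hxy : G x y) :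
    acLabel G n x = 0 ∧ acLabel G n y = 1 := by
  have hy2 : WalkEnd G QPattern 2 y :=
    ⟨x, ⟨w, trivial, Or.inl ⟨Or.inl (Nat.zero_le 1), hwx⟩⟩, Or.inl ⟨Or.inl le_rfl, hxy⟩⟩
  have hyout : ∀ z, ¬ G y z := fun z =>
    not_adj_of_walkEnd_of_not_homTo_QArc hn h3 hQ le_rfl (by omega) rfl hy2
  have hy : sInf (acIndexSet G n y) = 2 :=
    le_antisymm (Nat.sInf_le (Or.inl ⟨le_rfl, hy2⟩)) (sInf_acIndexSet_of_sink hn h3 hyout).2.1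
  rw [acLabel_of_in_out ⟨w, hwx⟩ ⟨y, hxy⟩,
    acLabel_of_not_in_out fun h => hyout _ h.2.choose_spec, hy]
  exact ⟨rfl, rfl⟩

theorem acLabel_of_source {y : W} (hx : ∀ w, ¬ G w x) (hxy : G x y) :
    (acLabel G n x = n - 1 ∧ acLabel G n y = 0) ∨
      (acLabel G n x % 2 = 0 ∧
        (acLabel G n y = acLabel G n x + 1 ∨ acLabel G n x = acLabel G n y + 1)) := by
  have := Nat.odd_iff.1 hn
  obtain ⟨ha, ha3, han⟩ := sInf_acIndexSet_of_source hn h3 hx hxy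
  have hstep : sInf (acIndexSet G n x) < n →
      WalkEnd G QPattern (sInf (acIndexSet G n x) + 1) y := by
    intro hlt
    rcases sInf_acIndexSet_mem (G := G) (n := n) (x := x) with ⟨-, hw⟩ | h | ⟨-, hout⟩
    · exact ⟨x, hw, Or.inl ⟨Or.inr ha, hxy⟩⟩
    · omega
    · exact absurd hxy (hout y)
  rw [acLabel_of_not_in_out fun h => h.1.elim hx]
  by_cases hy : ∃ z, G y z
  · have : sInf (acIndexSet G n x) = n := by
      by_contra hne
      obtain ⟨z, hyz⟩ := hy
      exact not_adj_of_walkEnd_of_not_homTo_QArc hn h3 hQ (by omega) (by omega) (by omega)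
        (hstep (by omega)) hyz
    rw [acLabel_of_in_out ⟨x, hxy⟩ hy]
    omega
  rw [not_exists] at hy
  obtain ⟨hb, hb2, hbn⟩ := sInf_acIndexSet_of_sink hn h3 hy
  have hba : sInf (acIndexSet G n y) ≤ sInf (acIndexSet G n x) + 1 := by
    rcases Nat.lt_or_ge (sInf (acIndexSet G n x)) n with hlt | hge
    · exact Nat.sInf_le (Or.inl ⟨by omega, hstep hlt⟩)
    · omega
  have hab : sInf (acIndexSet G n x) ≤ sInf (acIndexSet G n y) + 1 := by
    rcases sInf_acIndexSet_mem (G := G) (n := n) (x := y) with ⟨-, hw⟩ | h | ⟨h, -⟩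
    · exact Nat.sInf_le (Or.inl ⟨by omega, y, hw, Or.inr ⟨by unfold QPattern; omega, hxy⟩⟩)
    · omega
    · omega
  rw [acLabel_of_not_in_out fun h => h.2.elim hy]
  omega

theorem homTo_ACArc_of_not_homTo_QArc : HomTo G (ACArc n) := by
  refine ⟨fun x => ⟨acLabel G n x, acLabel_lt (by omega) x⟩, fun x y hxy => (acArc_iff hn).2 ?_⟩
  simp only
  by_cases hx : ∃ w, G w x
  · obtain ⟨w, hwx⟩ := hx
    have := acLabel_of_in_arc hn h3 hQ hwx hxy
    omega
  · have := acLabel_of_source hn h3 hQ (not_exists.1 hx) hxy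
    omega

end ACLabel

theorem dualityPair_QArc_ACArc {n : ℕ} (hn : Odd n) (h3 : 3 ≤ n) :
    DualityPair (QArc (n + 1)) (ACArc n) := fun _ _ =>
  ⟨fun hQ hA => not_homTo_QArc_ACArc hn h3 (hQ.trans hA),
    fun hA => by_contra fun hQ => hA (homTo_ACArc_of_not_homTo_QArc hn h3 hQ)⟩

section LevelSequences

variable {f : ℕ → ℕ} {L h : ℕ}

theorem exists_crossing (hf0 : f 0 = 0) (hfL : f L = h) (hh : 0 < h) (hle : ∀ t ≤ L, f t ≤ h) :
    ∃ i j, i < j ∧ j ≤ L ∧ f i = 0 ∧ f j = h ∧ ∀ t, i < t → t < j → 0 < f t ∧ f t < h := by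
  classical
  have hex : ∃ j, f j = h := ⟨L, hfL⟩
  have hj := Nat.find_spec hex
  have hjL : Nat.find hex ≤ L := Nat.find_min' hex hfL
  have hi : f (Nat.findGreatest (fun t => f t = 0) (Nat.find hex)) = 0 :=
    Nat.findGreatest_spec (P := fun t => f t = 0) (Nat.zero_le _) hf0
  have hij := Nat.findGreatest_le (P := fun t => f t = 0) (Nat.find hex)
  refine ⟨_, _, lt_of_le_of_ne hij fun h' => ?_, hjL, hi, hj, fun t hit htj => ?_⟩
  · rw [h'] at hi
    omega
  · have h0 : f t ≠ 0 := Nat.findGreatest_is_greatest (P := fun t => f t = 0) hit htj.le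
    have hh' : f t ≠ h := Nat.find_min hex htj
    have := hle t (by omega)
    omega

theorem alternates_of_crossing {i j : ℕ}
    (hstep : ∀ t < j, f (t + 1) = f t + 1 ∨ f t = f (t + 1) + 1)
    (hi : f i = 0) (hin : ∀ t, i < t → t < j → 0 < f t ∧ f t < 3) :
    ∀ k, 1 ≤ k → i + k < j → f (i + k) = 2 - k % 2 := by
  intro k hk
  induction k, hk using Nat.le_induction with
  | base =>
    intro hj
    have := hstep i (by omega)
    have := hin (i + 1) (by omega) hj
    omega
  | succ k hk ih =>
    intro hkj
    have := ih (by omega)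
    have hs := hstep (i + k) (by omega)
    have := hin (i + (k + 1)) (by omega) hkj
    rw [Nat.add_assoc] at hs
    omega

theorem exists_rising_segment (hstep : ∀ t < L, f (t + 1) = f t + 1 ∨ f t = f (t + 1) + 1)
    (hf0 : f 0 = 0) (hfL : f L = h) (hle : ∀ t ≤ L, f t ≤ h) (h1 : 1 ≤ h) (h2 : h ≤ 2) :
    ∃ i, i + h ≤ L ∧ ∀ k < h, f (i + (k + 1)) = f (i + k) + 1 := by
  obtain ⟨i, j, hij, hjL, hi, hj, hin⟩ := exists_crossing hf0 hfL h1 hle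
  have s0 := hstep i (by omega)
  refine ⟨i, ?_⟩
  rcases Nat.lt_or_ge (i + 1) j with h' | h'
  · have := hin (i + 1) (by omega) h'
    have s1 := hstep (i + 1) (by omega)
    obtain rfl : j = i + 1 + 1 := by
      by_contra hne
      have := hin (i + 1 + 1) (by omega) (by omega)
      omega
    refine ⟨by omega, fun k hk => ?_⟩
    rcases (show k = 0 ∨ k = 1 by omega) with rfl | rfl
    · show f (i + 1) = f i + 1
      omega
    · show f (i + 1 + 1) = f (i + 1) + 1
      omega
  · obtain rfl : j = i + 1 := by omega
    refine ⟨by omega, fun k hk => ?_⟩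
    obtain rfl : k = 0 := by omega
    show f (i + 1) = f i + 1
    omega

theorem exists_qForward_segment (hstep : ∀ t < L, f (t + 1) = f t + 1 ∨ f t = f (t + 1) + 1)
    (hf0 : f 0 = 0) (hfL : f L = 3) (hle : ∀ t ≤ L, f t ≤ 3) :
    ∃ i m, Odd m ∧ 3 ≤ m ∧ i + m ≤ L ∧
      ∀ k < m, (f (i + (k + 1)) = f (i + k) + 1 ↔ QForward (m + 1) k) := by
  obtain ⟨i, j, hij, hjL, hi, hj, hin⟩ := exists_crossing hf0 hfL (by norm_num) hle
  have hprofile := alternates_of_crossing (fun t ht => hstep t (by omega)) hi hin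
  obtain ⟨m, rfl⟩ : ∃ m, j = i + m := ⟨j - i, by omega⟩
  have s0 := hstep i (by omega)
  have hm2 : 2 ≤ m := by
    by_contra
    obtain rfl : m = 1 := by omega
    omega
  have hlast := hprofile (m - 1) (by omega) (by omega)
  have s1 := hstep (i + (m - 1)) (by omega)
  rw [show i + (m - 1) + 1 = i + m by omega] at s1
  have hm : m % 2 = 1 := by omega
  refine ⟨i, m, Nat.odd_iff.2 hm, by omega, hjL, fun k hk => ?_⟩
  rw [qForward_iff]
  have hk1 : f (i + (k + 1)) = if k + 1 = m then 3 else 2 - (k + 1) % 2 := by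
    split_ifs with h
    · rw [h, hj]
    · exact hprofile (k + 1) (by omega) (by omega)
  have hk0 : f (i + k) = if k = 0 then 0 else 2 - k % 2 := by
    split_ifs with h
    · rw [h, Nat.add_zero, hi]
    · exact hprofile k (by omega) (by omega)
  rw [hk0, hk1]
  split_ifs <;> omega

end LevelSequences

section Levels

variable {V : Type*} {T : V → V → Prop} {lvl : V → ℕ}

theorem exists_path_seq {G : SimpleGraph V} (hG : G.Connected) (r s : V) :
    ∃ (L : ℕ) (w : ℕ → V), w 0 = r ∧ w L = s ∧ Set.InjOn w {t | t ≤ L} ∧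
      ∀ t < L, G.Adj (w t) (w (t + 1)) := by
  obtain ⟨p, hp⟩ := hG.preconnected.exists_isPath r s
  exact ⟨p.length, p.getVert, p.getVert_zero, p.getVert_length, hp.getVert_injOn,
    fun t ht => p.adj_getVert_succ ht⟩

theorem succ_le_card_of_injOn [Fintype V] {w : ℕ → V} {L i m : ℕ}
    (hw : Set.InjOn w {t | t ≤ L}) (him : i + m ≤ L) : m + 1 ≤ Fintype.card V := by
  have := Fintype.card_le_of_injective (fun u : Fin (m + 1) => w (i + u)) fun u v huv =>
    Fin.ext (by
      have := hw (show i + (u : ℕ) ≤ L by omega) (show i + (v : ℕ) ≤ L by omega) huv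
      omega)
  simpa using this

theorem level_of_adj (hlvl : ∀ u v, T u v → lvl v = lvl u + 1) {a b : V}
    (h : (fromRel T).Adj a b) :
    (T a b ∧ lvl b = lvl a + 1) ∨ (T b a ∧ lvl a = lvl b + 1) := by
  rcases ((fromRel_adj _ _ _).1 h).2 with h | h
  · exact Or.inl ⟨h, hlvl _ _ h⟩
  · exact Or.inr ⟨h, hlvl _ _ h⟩

theorem level_step_of_adj (hlvl : ∀ u v, T u v → lvl v = lvl u + 1) {a b : V}
    (h : (fromRel T).Adj a b) :
    lvl b = lvl a + 1 ∨ lvl a = lvl b + 1 := by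
  rcases level_of_adj hlvl h with ⟨-, h⟩ | ⟨-, h⟩ <;> omega

theorem hom_pathArc_of_adj (hlvl : ∀ u v, T u v → lvl v = lvl u + 1) {w : ℕ → V} {m : ℕ}
    (hw : ∀ k < m, (fromRel T).Adj (w k) (w (k + 1))) :
    Hom (PathArc (fun k => lvl (w (k + 1)) = lvl (w k) + 1) (m + 1)) T fun u => w u := by
  rintro u v (⟨huv, hup⟩ | ⟨huv, hdown⟩)
  · rcases level_of_adj hlvl (hw u (by omega)) with ⟨h, -⟩ | ⟨-, h⟩
    · simpa only [huv] using h
    · exact absurd hup (by omega)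
  · rcases level_of_adj hlvl (hw v (by omega)) with ⟨-, h⟩ | ⟨h, -⟩
    · exact absurd h hdown
    · simpa only [huv] using h

variable [Fintype V]

theorem homEquiv_diPath (hlvl : ∀ u v, T u v → lvl v = lvl u + 1)
    (hconn : (fromRel T).Connected) {r s : V} (hr : lvl r = 0) {h : ℕ} (hub : ∀ v, lvl v ≤ h)
    (hs : lvl s = h) (h1 : 1 ≤ h) (h2 : h ≤ 2) :
    h + 1 ≤ Fintype.card V ∧ HomEquiv T (DiPath (h + 1)) := by
  obtain ⟨L, w, hw0, hwL, hinj, hadj⟩ := exists_path_seq hconn r s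
  obtain ⟨i, hiL, hrise⟩ := exists_rising_segment (f := fun t => lvl (w t))
    (fun t ht => level_step_of_adj hlvl (hadj t ht)) (by simp [hw0, hr]) (by simp [hwL, hs])
    (fun t _ => hub _) h1 h2
  have hhom := hom_pathArc_of_adj hlvl (w := fun k => w (i + k)) (m := h)
    fun k hk => hadj _ (by omega)
  rw [pathArc_congr fun k hk => iff_true_intro (hrise k hk), ← diPath_eq_pathArc] at hhom
  exact ⟨succ_le_card_of_injOn hinj hiL,
    ⟨fun v => ⟨lvl v, by have := hub v; omega⟩, fun u v huv => hlvl u v huv⟩, _, hhom⟩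

theorem exists_hom_QArc (hlvl : ∀ u v, T u v → lvl v = lvl u + 1)
    (hconn : (fromRel T).Connected) {r s : V} (hr : lvl r = 0) (hub : ∀ v, lvl v ≤ 3)
    (hs : lvl s = 3) :
    ∃ m, Odd m ∧ 3 ≤ m ∧ m + 1 ≤ Fintype.card V ∧ HomTo (QArc (m + 1)) T := by
  obtain ⟨L, w, hw0, hwL, hinj, hadj⟩ := exists_path_seq hconn r s
  obtain ⟨i, m, hm, hm3, hiL, hpat⟩ := exists_qForward_segment (f := fun t => lvl (w t))
    (fun t ht => level_step_of_adj hlvl (hadj t ht)) (by simp [hw0, hr]) (by simp [hwL, hs])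
    (fun t _ => hub _)
  have hhom := hom_pathArc_of_adj hlvl (w := fun k => w (i + k)) (m := m)
    fun k hk => hadj _ (by omega)
  rw [pathArc_congr hpat, ← qArc_eq_pathArc] at hhom
  exact ⟨m, hm, hm3, succ_le_card_of_injOn hinj hiL, _, hhom⟩

end Levels

section QLabel

variable {V : Type*} {T : V → V → Prop} {lvl : V → ℕ} {n : ℕ} {v : V}

variable (T lvl n) in
def qIndexSet (v : V) : Set ℕ :=
  {i | (1 ≤ i ∧ i % 2 = lvl v % 2 ∧ WalkEnd T QPattern i v) ∨ i = n - 3 + lvl v}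

variable (T lvl n) in
/-- Levels `0` and `3` go to the ends of `QArc (n + 1)`. A vertex of level `1` or `2` goes to the
length of the shortest initial segment of `QArc` ending at it whose length has the parity of its
level (so that the segment starts at level `0`), capped at `n - 2` resp. `n - 1`. -/
noncomputable def qLabel (v : V) : ℕ :=
  if lvl v = 0 then 0 else if lvl v = 3 then n else sInf (qIndexSet T lvl n v)

theorem sInf_qIndexSet_mem : sInf (qIndexSet T lvl n v) ∈ qIndexSet T lvl n v :=
  Nat.sInf_mem ⟨_, Or.inr rfl⟩

theorem sInf_qIndexSet_le : sInf (qIndexSet T lvl n v) ≤ n - 3 + lvl v :=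
  Nat.sInf_le (Or.inr rfl)

theorem qLabel_of_eq_zero (h : lvl v = 0) : qLabel T lvl n v = 0 := if_pos h

theorem qLabel_of_eq_three (h : lvl v = 3) : qLabel T lvl n v = n := by
  rw [qLabel, if_neg (by omega), if_pos h]

theorem qLabel_of_ne (h0 : lvl v ≠ 0) (h3 : lvl v ≠ 3) :
    qLabel T lvl n v = sInf (qIndexSet T lvl n v) := by
  rw [qLabel, if_neg h0, if_neg h3]

variable (hn : Odd n) (h3 : 3 ≤ n)
include hn h3

theorem sInf_qIndexSet_mod_two (hv : 1 ≤ lvl v) :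
    1 ≤ sInf (qIndexSet T lvl n v) ∧ sInf (qIndexSet T lvl n v) % 2 = lvl v % 2 := by
  have := Nat.odd_iff.1 hn
  rcases sInf_qIndexSet_mem (T := T) (lvl := lvl) (n := n) (v := v) with ⟨h1, h2, -⟩ | h <;>
    omega

theorem qLabel_eq_one_of_arc {a b : V} (hb : lvl b = 1) (hab : T a b) :
    qLabel T lvl n b = 1 := by
  have : sInf (qIndexSet T lvl n b) ≤ 1 :=
    Nat.sInf_le (Or.inl ⟨le_rfl, by omega, a, trivial, Or.inl ⟨Or.inl (Nat.zero_le 1), hab⟩⟩)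
  have := sInf_qIndexSet_mod_two (T := T) hn h3 (show 1 ≤ lvl b by omega)
  rw [qLabel_of_ne (by omega) (by omega)]
  omega

theorem qLabel_of_arc_from_one {a b : V} (ha : lvl a = 1) (hb : lvl b = 2) (hab : T a b) :
    qLabel T lvl n a % 2 = 1 ∧ qLabel T lvl n a + 2 ≤ n ∧ 1 ≤ qLabel T lvl n b ∧
      (qLabel T lvl n b = qLabel T lvl n a + 1 ∨ qLabel T lvl n a = qLabel T lvl n b + 1) := by
  have := Nat.odd_iff.1 hn
  have hpa := sInf_qIndexSet_mod_two (T := T) hn h3 (show 1 ≤ lvl a by omega)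
  have hpb := sInf_qIndexSet_mod_two (T := T) hn h3 (show 1 ≤ lvl b by omega)
  have hla := sInf_qIndexSet_le (T := T) (lvl := lvl) (n := n) (v := a)
  have hlb := sInf_qIndexSet_le (T := T) (lvl := lvl) (n := n) (v := b)
  have hba : sInf (qIndexSet T lvl n b) ≤ sInf (qIndexSet T lvl n a) + 1 := by
    rcases sInf_qIndexSet_mem (T := T) (lvl := lvl) (n := n) (v := a) with ⟨-, -, hw⟩ | h
    · exact Nat.sInf_le (Or.inl ⟨by omega, by omega, a, hw, Or.inl ⟨Or.inr (by omega), hab⟩⟩)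
    · omega
  have hab' : sInf (qIndexSet T lvl n a) ≤ sInf (qIndexSet T lvl n b) + 1 := by
    rcases sInf_qIndexSet_mem (T := T) (lvl := lvl) (n := n) (v := b) with ⟨-, -, hw⟩ | h
    · exact Nat.sInf_le (Or.inl ⟨by omega, by omega, b, hw,
        Or.inr ⟨by unfold QPattern; omega, hab⟩⟩)
    · omega
  rw [qLabel_of_ne (v := a) (by omega) (by omega), qLabel_of_ne (v := b) (by omega) (by omega)]
  omega

theorem qLabel_of_arc_from_two (hmin : ∀ m, Odd m → 3 ≤ m → HomTo (QArc (m + 1)) T → n ≤ m)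
    {a b : V} (ha : lvl a = 2) (hab : T a b) : qLabel T lvl n a = n - 1 := by
  have hpa := sInf_qIndexSet_mod_two (T := T) hn h3 (show 1 ≤ lvl a by omega)
  have hla := sInf_qIndexSet_le (T := T) (lvl := lvl) (n := n) (v := a)
  have : n - 1 ≤ sInf (qIndexSet T lvl n a) := by
    rcases sInf_qIndexSet_mem (T := T) (lvl := lvl) (n := n) (v := a) with ⟨-, -, hw⟩ | h
    · have hodd : Odd (sInf (qIndexSet T lvl n a) + 1) := Nat.odd_iff.2 (by omega)
      have := hmin _ hodd (by omega)
        ((homTo_QArc_iff hodd (by omega)).2 ⟨a, b, by rwa [Nat.add_sub_cancel], hab⟩)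
      omega
    · omega
  rw [qLabel_of_ne (by omega) (by omega)]
  omega

theorem homTo_QArc_of_minimal (hlvl : ∀ u v, T u v → lvl v = lvl u + 1) (hub : ∀ v, lvl v ≤ 3)
    (hmin : ∀ m, Odd m → 3 ≤ m → HomTo (QArc (m + 1)) T → n ≤ m) :
    HomTo T (QArc (n + 1)) := by
  have := Nat.odd_iff.1 hn
  have hlt : ∀ v, qLabel T lvl n v < n + 1 := by
    intro v
    have := sInf_qIndexSet_le (T := T) (lvl := lvl) (n := n) (v := v)
    have := hub v
    unfold qLabel
    split_ifs <;> omega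
  refine ⟨fun v => ⟨qLabel T lvl n v, hlt v⟩, fun a b hab => ?_⟩
  simp only [QArc, qForward_iff]
  have hb := hlvl a b hab
  have := hub b
  rcases (show lvl a = 0 ∨ lvl a = 1 ∨ lvl a = 2 by omega) with ha | ha | ha
  · have := qLabel_of_eq_zero (T := T) (n := n) ha
    have := qLabel_eq_one_of_arc hn h3 (show lvl b = 1 by omega) hab
    omega
  · have := qLabel_of_arc_from_one hn h3 ha (by omega) hab
    omega
  · have := qLabel_of_arc_from_two hn h3 hmin ha hab
    have := qLabel_of_eq_three (T := T) (n := n) (show lvl b = 3 by omega)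
    omega

end QLabel

theorem exists_homEquiv_QArc {V : Type*} [Fintype V] {T : V → V → Prop} {lvl : V → ℕ}
    (hlvl : ∀ u v, T u v → lvl v = lvl u + 1) (hconn : (fromRel T).Connected) {r s : V}
    (hr : lvl r = 0) (hub : ∀ v, lvl v ≤ 3) (hs : lvl s = 3) :
    ∃ n, Odd n ∧ 3 ≤ n ∧ n + 1 ≤ Fintype.card V ∧ HomEquiv T (QArc (n + 1)) := by
  classical
  obtain ⟨m, hm, hm3, hcard, hQ⟩ := exists_hom_QArc hlvl hconn hr hub hs
  have hex : ∃ n, Odd n ∧ 3 ≤ n ∧ HomTo (QArc (n + 1)) T := ⟨m, hm, hm3, hQ⟩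
  obtain ⟨hn, hn3, hnQ⟩ := Nat.find_spec hex
  have hle : Nat.find hex ≤ m := Nat.find_min' hex ⟨hm, hm3, hQ⟩
  exact ⟨_, hn, hn3, by omega, homTo_QArc_of_minimal hn hn3 hlvl hub
    (fun k hk hk3 hkQ => Nat.find_min' hex ⟨hk, hk3, hkQ⟩), hnQ⟩

theorem stmt16_general {V : Type} [Fintype V] (T : V → V → Prop)
    (htree : (SimpleGraph.fromRel T).IsTree) (lvl : V → ℕ) (h : ℕ)
    (hlvl : ∀ u v, T u v → lvl v = lvl u + 1) (h0 : ∃ v, lvl v = 0)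
    (hub : ∀ v, lvl v ≤ h) (hmax : ∃ v, lvl v = h) (h1 : 1 ≤ h) (h3 : h ≤ 3) :
    (∃ (k : ℕ) (B : Fin k → Fin k → Prop), k ≤ Fintype.card V ∧ DualityPair T B) ∧
    (h = 1 → DualityPair T (TT 1)) ∧
    (h = 2 → DualityPair T (TT 2)) ∧
    (h = 3 → ∃ n, Odd n ∧ 3 ≤ n ∧ n + 1 ≤ Fintype.card V ∧
      HomEquiv T (QArc (n + 1)) ∧ DualityPair T (ACArc n)) := by
  obtain ⟨r, hr⟩ := h0
  obtain ⟨s, hs⟩ := hmax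
  have low : h ≤ 2 → h + 1 ≤ Fintype.card V ∧ DualityPair T (TT h) := fun h2 =>
    have ⟨hcard, hequiv⟩ := homEquiv_diPath hlvl htree.connected hr hub hs h1 h2
    ⟨hcard, hequiv.dualityPair (dualityPair_diPath_TT h)⟩
  have high : h = 3 → ∃ n, Odd n ∧ 3 ≤ n ∧ n + 1 ≤ Fintype.card V ∧
      HomEquiv T (QArc (n + 1)) ∧ DualityPair T (ACArc n) := by
    rintro rfl
    obtain ⟨n, hn, hn3, hcard, hequiv⟩ := exists_homEquiv_QArc hlvl htree.connected hr hub hs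
    exact ⟨n, hn, hn3, hcard, hequiv, hequiv.dualityPair (dualityPair_QArc_ACArc hn hn3)⟩
  refine ⟨?_, fun hh => hh ▸ (low (by omega)).2, fun hh => hh ▸ (low (by omega)).2, high⟩
  rcases Nat.lt_or_ge h 3 with hlt | hge
  · exact ⟨h, TT h, by have := (low (by omega)).1; omega, (low (by omega)).2⟩
  · obtain ⟨n, -, -, hcard, -, hdual⟩ := high (by omega)
    exact ⟨n, ACArc n, by omega, hdual⟩

/-- For every oriented tree `T` of positive height at most `3` there is a dual of `T`
with at most linearly many (indeed at most `|V T|`) vertices; specifically, if `T` has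
height 1 then `TT₁` is a dual, if height 2 then `TT₂` is a dual, and if height 3 then the
core of `T` is `Q (n+1)` for some odd `n ≥ 3` and `AC n` is a dual. -/
theorem stmt16 {V : Type} [Fintype V] (T : V → V → Prop) (hor : IsOriented T)
    (htree : (SimpleGraph.fromRel T).IsTree) (lvl : V → ℕ) (h : ℕ)
    (hlvl : ∀ u v, T u v → lvl v = lvl u + 1) (h0 : ∃ v, lvl v = 0)
    (hub : ∀ v, lvl v ≤ h) (hmax : ∃ v, lvl v = h) (h1 : 1 ≤ h) (h3 : h ≤ 3) :
    (∃ (k : ℕ) (B : Fin k → Fin k → Prop), k ≤ Fintype.card V ∧ DualityPair T B) ∧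
    (h = 1 → DualityPair T (TT 1)) ∧
    (h = 2 → DualityPair T (TT 2)) ∧
    (h = 3 → ∃ n, Odd n ∧ 3 ≤ n ∧ n + 1 ≤ Fintype.card V ∧
      HomEquiv T (QArc (n + 1)) ∧ DualityPair T (ACArc n)) :=
  stmt16_general T htree lvl h hlvl h0 hub hmax h1 h3
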